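/- Let n ≥ m+2 and let I be a nonempty independent set of P_n^m. Then there exists an independent set I' of P_n^m with min(I') ≤ m+1 and max(I') ≥ n−m such that γ_gr(P_n^m, I) ≤ γ_gr(P_n^m, I'). -/

import Mathlib

namespace GrundyDom

/-- Closed neighborhood N[v]. -/
def cn {V : Type*} (G : SimpleGraph V) (v : V) : Set V := insert v (G.neighborSet v)

/-- Union of closed neighborhoods of the vertices of a list. -/
def cnUnion {V : Type*} (G : SimpleGraph V) (L : List V) : Set V := ⋃ v ∈ L, cn G v

/-- Private neighborhood of `v` with respect to the first `i` entries of `S`: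
`N[v] \ (N[v_1] ∪ ... ∪ N[v_i])`. -/
def PN {V : Type*} (G : SimpleGraph V) (S : List V) (i : ℕ) (v : V) : Set V :=
  cn G v \ cnUnion G (S.take i)

/-- A legal dominating sequence: distinct vertices, dominating set, and every
vertex of the sequence has a nonempty private neighborhood w.r.t. its predecessors. -/
structure IsLegal {V : Type*} (G : SimpleGraph V) (S : List V) : Prop where
  nodup : S.Nodup
  dominates : ∀ v : V, ∃ u ∈ S, v ∈ cn G u
  legal : ∀ i : Fin S.length, (PN G S i.val (S.get i)).Nonempty

/-- The set `I_S` of vertices that footprint themselves in `S`. -/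
def selfFoot {V : Type*} (G : SimpleGraph V) (S : List V) : Set V :=
  {v | ∃ i : Fin S.length, S.get i = v ∧ v ∈ PN G S i.val v}

/-- Grundy domination number: maximum length of a legal dominating sequence. -/
noncomputable def gammaGr {V : Type*} (G : SimpleGraph V) : ℕ :=
  sSup {k | ∃ S : List V, IsLegal G S ∧ S.length = k}

/-- `γ_gr(G, I)`: maximum length of a legal dominating sequence `S` with `I_S = I`. -/
noncomputable def gammaGrOn {V : Type*} (G : SimpleGraph V) (I : Set V) : ℕ :=
  sSup {k | ∃ S : List V, IsLegal G S ∧ selfFoot G S = I ∧ S.length = k}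

/-- `γ_gr^u(G)`: maximum of `γ_gr(G, I)` over independent sets `I` containing `u`. -/
noncomputable def gammaGrVert {V : Type*} (G : SimpleGraph V) (u : V) : ℕ :=
  sSup {k | ∃ I : Set V, (∀ ⦃a⦄, a ∈ I → ∀ ⦃b⦄, b ∈ I → a ≠ b → ¬ G.Adj a b) ∧
    u ∈ I ∧ k = gammaGrOn G I}

/-- Independent set of a graph. -/
def IsIndep {V : Type*} (G : SimpleGraph V) (I : Set V) : Prop :=
  ∀ ⦃u⦄, u ∈ I → ∀ ⦃v⦄, v ∈ I → u ≠ v → ¬ G.Adj u v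

/-- The X-join product `G ↩ 𝓡`: replace each vertex `v` of `G` by the graph `R v`. -/
def XJoin {V : Type*} (G : SimpleGraph V) {W : V → Type*} (R : ∀ v, SimpleGraph (W v)) :
    SimpleGraph (Σ v, W v) where
  Adj x y := G.Adj x.1 y.1 ∨ ∃ h : x.1 = y.1, (R y.1).Adj (h ▸ x.2) y.2
  symm := by
    refine ⟨?_⟩
    rintro ⟨a, xa⟩ ⟨b, yb⟩ (h | ⟨h, hadj⟩)
    · exact Or.inl h.symm
    · dsimp at h hadj
      subst h
      exact Or.inr ⟨rfl, (R a).symm.symm _ _ hadj⟩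
  loopless := by
    refine ⟨?_⟩
    rintro ⟨a, xa⟩ (h | ⟨h, hadj⟩)
    · exact G.loopless.irrefl a h
    · exact (R a).loopless.irrefl xa hadj

/-- The lexicographic product `G ∘ H`. -/
def Lex {V W : Type*} (G : SimpleGraph V) (H : SimpleGraph W) : SimpleGraph (V × W) where
  Adj x y := G.Adj x.1 y.1 ∨ (x.1 = y.1 ∧ H.Adj x.2 y.2)
  symm := by
    refine ⟨?_⟩
    rintro x y (h | ⟨h1, h2⟩)
    · exact Or.inl h.symm
    · exact Or.inr ⟨h1.symm, h2.symm⟩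
  loopless := by
    refine ⟨?_⟩
    rintro x (h | ⟨_, h⟩)
    · exact G.loopless.irrefl _ h
    · exact H.loopless.irrefl _ h

/-- The replacement graph `G_{u ↩ H}`: replace the vertex `u` of `G` by `H`. -/
def Replace {V : Type*} (G : SimpleGraph V) (u : V) {W : Type*} (H : SimpleGraph W) :
    SimpleGraph ({v : V // v ≠ u} ⊕ W) where
  Adj x y :=
    match x, y with
    | Sum.inl a, Sum.inl b => G.Adj a.1 b.1
    | Sum.inl a, Sum.inr _ => G.Adj a.1 u
    | Sum.inr _, Sum.inl b => G.Adj u b.1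
    | Sum.inr h1, Sum.inr h2 => H.Adj h1 h2
  symm := by refine ⟨?_⟩; rintro (a|a) (b|b) h <;> exact h.symm
  loopless := by refine ⟨?_⟩; rintro (a|a) h <;> exact h.ne rfl

/-- `C_n^m`: the m-th power of the n-cycle, on vertex set `ZMod n`;
two vertices are adjacent iff their circular distance is between 1 and m. -/
def cyclePow (n m : ℕ) : SimpleGraph (ZMod n) where
  Adj i j := i ≠ j ∧ ∃ k : ℕ, 1 ≤ k ∧ k ≤ m ∧ (j = i + k ∨ i = j + k)
  symm := by
    refine ⟨?_⟩
    rintro i j ⟨hne, k, h1, h2, h3⟩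
    exact ⟨hne.symm, k, h1, h2, h3.symm⟩
  loopless := ⟨fun i h => h.1 rfl⟩

/-- `P_n^m`: the m-th power of the n-path, on vertex set `Fin n`
(vertex `i` represents the `(i+1)`-st vertex of the path);
two vertices adjacent iff their distance is between 1 and m. -/
def pathPow (n m : ℕ) : SimpleGraph (Fin n) where
  Adj i j := i ≠ j ∧ Nat.dist i.val j.val ≤ m
  symm := by
    refine ⟨?_⟩
    rintro i j ⟨hne, hd⟩
    exact ⟨hne.symm, by rwa [Nat.dist_comm]⟩
  loopless := ⟨fun i h => h.1 rfl⟩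

end GrundyDom

open GrundyDom Finset

/-
An end vertex `w` of `P_n^m` is simplicial: its closed neighbourhood is a clique, so
`N[w] ⊆ N[c]` for every `c ∈ N[w]`. In a legal sequence, replace the first vertex `c`
dominating `w` by `w` itself. Then `w` footprints itself, every later vertex sees a covered
set no larger than before and so stays legal, and every vertex outside `N[w]` that footprinted
itself still does. The result may fail to dominate, but appending undominated vertices only
lengthens the sequence and enlarges its set of self-footprinters. Doing this at both ends of
a longest sequence `S` with `I_S = I` gives a legal dominating sequence at least as long whose
set `I'` of self-footprinters contains the first and the last vertex; such a set is always
independent.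
-/

namespace GrundyDom

variable {V : Type*} (G : SimpleGraph V)

theorem mem_cn {u v : V} : v ∈ cn G u ↔ v = u ∨ G.Adj u v := Iff.rfl

theorem mem_cn_self (v : V) : v ∈ cn G v := Set.mem_insert _ _

theorem mem_cn_comm {u v : V} : v ∈ cn G u ↔ u ∈ cn G v := by
  simp only [mem_cn, eq_comm, G.adj_comm]

theorem mem_cnUnion {L : List V} {y : V} : y ∈ cnUnion G L ↔ ∃ v ∈ L, y ∈ cn G v := by
  simp [cnUnion]

@[simp]
theorem cnUnion_nil : cnUnion G ([] : List V) = ∅ := by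
  simp [cnUnion]

@[simp]
theorem cnUnion_cons (x : V) (L : List V) :
    cnUnion G (x :: L) = cn G x ∪ cnUnion G L := by
  ext y
  simp [mem_cnUnion, or_and_right, exists_or]

/-- Legality of a sequence played after the vertices of `C` have already been dominated. -/
def IsLegalFrom (C : Set V) : List V → Prop
  | [] => True
  | x :: L => (cn G x \ C).Nonempty ∧ IsLegalFrom (C ∪ cn G x) L

def selfFootFrom (C : Set V) : List V → Set V
  | [] => ∅
  | x :: L => {x} \ C ∪ selfFootFrom (C ∪ cn G x) L

variable {G}

@[simp]
theorem isLegalFrom_nil (C : Set V) : IsLegalFrom G C [] := trivial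

@[simp]
theorem isLegalFrom_cons {C : Set V} {x : V} {L : List V} :
    IsLegalFrom G C (x :: L) ↔ (cn G x \ C).Nonempty ∧ IsLegalFrom G (C ∪ cn G x) L :=
  Iff.rfl

@[simp]
theorem selfFootFrom_nil (C : Set V) : selfFootFrom G C [] = ∅ := rfl

@[simp]
theorem selfFootFrom_cons (C : Set V) (x : V) (L : List V) :
    selfFootFrom G C (x :: L) = {x} \ C ∪ selfFootFrom G (C ∪ cn G x) L := rfl

theorem IsLegalFrom.anti {C C' : Set V} (h : C ⊆ C') :
    ∀ {S : List V}, IsLegalFrom G C' S → IsLegalFrom G C S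
  | [], _ => trivial
  | _ :: _, ⟨hx, hL⟩ =>
    ⟨hx.mono (Set.sdiff_subset_sdiff_right h),
      IsLegalFrom.anti (Set.union_subset_union_left _ h) hL⟩

theorem selfFootFrom_anti {C C' : Set V} (h : C ⊆ C') :
    ∀ S : List V, selfFootFrom G C' S ⊆ selfFootFrom G C S
  | [] => le_rfl
  | _ :: L => Set.union_subset_union (Set.sdiff_subset_sdiff_right h)
      (selfFootFrom_anti (Set.union_subset_union_left _ h) L)

theorem notMem_of_mem_selfFootFrom :
    ∀ {C : Set V} {S : List V} {v : V}, v ∈ selfFootFrom G C S → v ∉ C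
  | _, [], _, hv => hv.elim
  | _, _ :: _, _, Or.inl hv => hv.2
  | _, _ :: _, _, Or.inr hv => fun hC => notMem_of_mem_selfFootFrom hv (Or.inl hC)

theorem isLegalFrom_append {A B : List V} :
    ∀ {C : Set V}, IsLegalFrom G C (A ++ B) ↔
      IsLegalFrom G C A ∧ IsLegalFrom G (C ∪ cnUnion G A) B := by
  induction A with
  | nil => simp
  | cons x L ih => simp [ih, and_assoc, Set.union_assoc]

theorem selfFootFrom_append (C : Set V) (A B : List V) :
    selfFootFrom G C (A ++ B) =
      selfFootFrom G C A ∪ selfFootFrom G (C ∪ cnUnion G A) B := by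
  induction A generalizing C with
  | nil => simp
  | cons x L ih => simp [ih, Set.union_assoc]

theorem IsLegalFrom.not_cn_subset :
    ∀ {C : Set V} {S : List V}, IsLegalFrom G C S → ∀ x ∈ S, ¬ cn G x ⊆ C
  | _, [], _, _, hx => (List.not_mem_nil hx).elim
  | _, y :: _, ⟨hy, hL⟩, x, hx => by
    rcases List.mem_cons.mp hx with rfl | hx
    · exact fun h => hy.ne_empty (Set.sdiff_eq_empty.mpr h)
    · exact fun h => hL.not_cn_subset x hx (h.trans Set.subset_union_left)

theorem IsLegalFrom.nodup : ∀ {C : Set V} {S : List V}, IsLegalFrom G C S → S.Nodup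
  | _, [], _ => List.nodup_nil
  | _, _ :: _, ⟨_, hL⟩ =>
    List.nodup_cons.mpr ⟨fun hx => hL.not_cn_subset _ hx Set.subset_union_right, hL.nodup⟩

theorem isLegalFrom_iff_forall : ∀ (S : List V) (C : Set V), IsLegalFrom G C S ↔
    ∀ i : Fin S.length, (cn G (S.get i) \ (C ∪ cnUnion G (S.take i))).Nonempty
  | [], _ => by simp
  | x :: L, C => by
    rw [isLegalFrom_cons, isLegalFrom_iff_forall L]
    simp [Fin.forall_fin_succ, Set.union_assoc]

theorem mem_selfFootFrom_iff : ∀ (S : List V) (C : Set V) (v : V), v ∈ selfFootFrom G C S ↔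
    ∃ i : Fin S.length, S.get i = v ∧ v ∉ C ∪ cnUnion G (S.take i)
  | [], _, _ => by simp
  | x :: L, C, v => by
    rw [selfFootFrom_cons, Set.mem_union, mem_selfFootFrom_iff L]
    simp [Fin.exists_fin_succ, Set.union_assoc, eq_comm]

theorem isLegal_iff {S : List V} :
    IsLegal G S ↔ IsLegalFrom G ∅ S ∧ ∀ v, ∃ u ∈ S, v ∈ cn G u := by
  have hleg : IsLegalFrom G ∅ S ↔ ∀ i : Fin S.length, (PN G S i (S.get i)).Nonempty := by
    simp [isLegalFrom_iff_forall, PN]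
  rw [hleg]
  exact ⟨fun h => ⟨h.legal, h.dominates⟩, fun h => ⟨(hleg.mpr h.1).nodup, h.2, h.1⟩⟩

theorem selfFoot_eq_selfFootFrom (S : List V) : selfFoot G S = selfFootFrom G ∅ S := by
  ext v
  simp [selfFoot, mem_selfFootFrom_iff, PN, mem_cn_self]

theorem isIndep_selfFootFrom : ∀ (C : Set V) (S : List V), IsIndep G (selfFootFrom G C S)
  | _, [] => fun _ hu => hu.elim
  | C, x :: L => by
    have hx : ∀ v ∈ selfFootFrom G (C ∪ cn G x) L, ¬ G.Adj x v := fun v hv hadj =>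
      notMem_of_mem_selfFootFrom hv (Or.inr (Or.inr hadj))
    rintro u (⟨rfl, -⟩ | hu) v (⟨rfl, -⟩ | hv) huv
    · exact absurd rfl huv
    · exact hx v hv
    · exact fun hadj => hx u hu hadj.symm
    · exact isIndep_selfFootFrom _ L hu hv huv

theorem isIndep_selfFoot (S : List V) : IsIndep G (selfFoot G S) := by
  rw [selfFoot_eq_selfFootFrom]
  exact isIndep_selfFootFrom ∅ S

theorem exists_isLegal_append [Fintype V] {S : List V} (hS : IsLegalFrom G ∅ S) :
    ∃ T, IsLegal G (S ++ T) := by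
  by_cases hdom : ∀ v, ∃ u ∈ S, v ∈ cn G u
  · exact ⟨[], by simpa [isLegal_iff] using ⟨hS, hdom⟩⟩
  push Not at hdom
  obtain ⟨v, hv⟩ := hdom
  have hSv : IsLegalFrom G ∅ (S ++ [v]) := by
    refine isLegalFrom_append.mpr ⟨hS, ⟨v, mem_cn_self G v, ?_⟩, trivial⟩
    simpa [mem_cnUnion] using hv
  have hlen : S.length < Fintype.card V := by
    simpa using hSv.nodup.length_le_card
  obtain ⟨T, hT⟩ := exists_isLegal_append hSv
  exact ⟨v :: T, by simpa using hT⟩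
termination_by Fintype.card V - S.length

variable (G) in
def IsSimplicial (w : V) : Prop := G.IsClique (cn G w)

theorem IsSimplicial.cn_subset {w c : V} (hw : IsSimplicial G w) (hc : c ∈ cn G w) :
    cn G w ⊆ cn G c := by
  intro x hx
  by_cases hxc : x = c
  · exact hxc ▸ mem_cn_self G x
  · exact Or.inr (hw hc hx (Ne.symm hxc))

/-- Replacing the first vertex that dominates a simplicial vertex `w` by `w` itself. -/
theorem IsSimplicial.exists_isLegalFrom {w : V} (hw : IsSimplicial G w) :
    ∀ {C : Set V} {S : List V}, IsLegalFrom G C S → w ∉ C → w ∈ cnUnion G S →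
      ∃ S', IsLegalFrom G C S' ∧ S'.length = S.length ∧
        insert w (selfFootFrom G C S \ cn G w) ⊆ selfFootFrom G C S'
  | _, [], _, _, hwS => by simp at hwS
  | C, x :: L, ⟨hx, hL⟩, hwC, hwS => by
    by_cases hwx : w ∈ cn G x
    · have hxw : x ∈ cn G w := (mem_cn_comm G).mp hwx
      have hC : C ∪ cn G w ⊆ C ∪ cn G x := Set.union_subset_union_right C (hw.cn_subset hxw)
      refine ⟨w :: L, ⟨⟨w, mem_cn_self G w, hwC⟩, hL.anti hC⟩, rfl, ?_⟩
      rintro v (rfl | ⟨⟨rfl, -⟩ | hv, hvw⟩)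
      · exact Or.inl ⟨rfl, hwC⟩
      · exact absurd hxw hvw
      · exact Or.inr (selfFootFrom_anti hC L hv)
    · obtain ⟨L', hL', hlen, hsf⟩ :=
        hw.exists_isLegalFrom hL (by simp [hwC, hwx]) (by simpa [hwx] using hwS)
      refine ⟨x :: L', ⟨hx, hL'⟩, by simp [hlen], ?_⟩
      rintro v (rfl | ⟨hv | hv, hvw⟩)
      · exact Or.inr (hsf (Set.mem_insert _ _))
      · exact Or.inl hv
      · exact Or.inr (hsf (Or.inr ⟨hv, hvw⟩))

theorem IsSimplicial.exists_isLegal [Fintype V] {w : V} (hw : IsSimplicial G w) {S : List V}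
    (hS : IsLegal G S) :
    ∃ S', IsLegal G S' ∧ S.length ≤ S'.length ∧
      insert w (selfFoot G S \ cn G w) ⊆ selfFoot G S' := by
  obtain ⟨hleg, hdom⟩ := isLegal_iff.mp hS
  obtain ⟨u, hu, hwu⟩ := hdom w
  obtain ⟨S', hS', hlen, hsf⟩ :=
    hw.exists_isLegalFrom hleg (Set.notMem_empty w) ((mem_cnUnion G).mpr ⟨u, hu, hwu⟩)
  obtain ⟨T, hT⟩ := exists_isLegal_append hS'
  refine ⟨S' ++ T, hT, by simp [hlen], ?_⟩
  rw [selfFoot_eq_selfFootFrom, selfFoot_eq_selfFootFrom, selfFootFrom_append]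
  exact hsf.trans Set.subset_union_left

section GammaGrOn

variable [Fintype V]

variable (G) in
theorem bddAbove_lengths_isLegal (I : Set V) :
    BddAbove {k | ∃ S : List V, IsLegal G S ∧ selfFoot G S = I ∧ S.length = k} :=
  ⟨Fintype.card V, by rintro _ ⟨S, hS, -, rfl⟩; exact hS.nodup.length_le_card⟩

theorem IsLegal.length_le_gammaGrOn {S : List V} (hS : IsLegal G S) :
    S.length ≤ gammaGrOn G (selfFoot G S) :=
  le_csSup (bddAbove_lengths_isLegal G _) ⟨S, hS, rfl, rfl⟩

variable (G) in
/-- When no legal dominating sequence has `I_S = I`, `gammaGrOn G I` is `sSup ∅ = 0`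
(the paper's `-∞`). -/
theorem exists_isLegal_gammaGrOn_le (I : Set V) :
    ∃ S, IsLegal G S ∧ gammaGrOn G I ≤ S.length := by
  by_cases hI : {k | ∃ S : List V, IsLegal G S ∧ selfFoot G S = I ∧ S.length = k}.Nonempty
  · obtain ⟨S, hS, -, hlen⟩ := Nat.sSup_mem hI (bddAbove_lengths_isLegal G I)
    exact ⟨S, hS, hlen.ge⟩
  · obtain ⟨S, hS⟩ := exists_isLegal_append (G := G) (isLegalFrom_nil ∅)
    exact ⟨S, hS, by simp [gammaGrOn, Set.not_nonempty_iff_eq_empty.mp hI]⟩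

end GammaGrOn

theorem mem_cn_pathPow {n m : ℕ} {u v : Fin n} :
    v ∈ cn (pathPow n m) u ↔ Nat.dist v u ≤ m := by
  rw [mem_cn]
  by_cases h : v = u
  · simp [h]
  · simp [pathPow, h, Ne.symm h, Nat.dist_comm]

theorem isSimplicial_pathPow {n m : ℕ} {w : Fin n} (hw : w.val = 0 ∨ w.val + 1 = n) :
    IsSimplicial (pathPow n m) w := by
  intro x hx y hy hxy
  rw [mem_cn_pathPow] at hx hy
  refine ⟨hxy, ?_⟩
  have := x.isLt
  have := y.isLt
  unfold Nat.dist at *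
  omega

end GrundyDom

theorem stmt12_general (n m : ℕ) (hn : m + 2 ≤ n)
    (I : Finset (Fin n)) :
    ∃ I' : Finset (Fin n), ∃ hne' : I'.Nonempty, IsIndep (pathPow n m) ↑I' ∧
      ((I'.min' hne').val : ℤ) + 1 ≤ m + 1 ∧
      (n : ℤ) - m ≤ ((I'.max' hne').val : ℤ) + 1 ∧
      gammaGrOn (pathPow n m) ↑I ≤ gammaGrOn (pathPow n m) ↑I' := by
  set G := pathPow n m
  let z : Fin n := ⟨0, by omega⟩
  let e : Fin n := ⟨n - 1, by omega⟩
  obtain ⟨S₀, hS₀, hI⟩ := exists_isLegal_gammaGrOn_le G ↑I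
  obtain ⟨S₁, hS₁, h₀₁, he⟩ :=
    (isSimplicial_pathPow (w := e) (Or.inr (by simp only [e]; omega))).exists_isLegal hS₀
  obtain ⟨S₂, hS₂, h₁₂, hz⟩ :=
    (isSimplicial_pathPow (w := z) (Or.inl rfl)).exists_isLegal hS₁
  have hez : e ∉ cn G z := by
    simp only [G, mem_cn_pathPow, Nat.dist, e, z]
    omega
  set J := (Set.toFinite (selfFoot G S₂)).toFinset
  have hzJ : z ∈ J := by simpa [J] using hz (Set.mem_insert z _)
  have heJ : e ∈ J := by simpa [J] using hz (Or.inr ⟨he (Set.mem_insert e _), hez⟩)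
  refine ⟨J, ⟨z, hzJ⟩, by simpa [J] using isIndep_selfFoot S₂, ?_, ?_, ?_⟩
  · have : (J.min' _).val ≤ 0 := J.min'_le z hzJ
    omega
  · have : n - 1 ≤ (J.max' _).val := J.le_max' e heJ
    omega
  · calc gammaGrOn G ↑I ≤ S₂.length := hI.trans (h₀₁.trans h₁₂)
      _ ≤ gammaGrOn G ↑J := by simpa [J] using hS₂.length_le_gammaGrOn

/-- for every nonempty independent set `I` of `P_n^m` there is an
independent set `I'` with `min(I') ≤ m+1` and `max(I') ≥ n-m` such that
`γ_gr(P_n^m, I) ≤ γ_gr(P_n^m, I')` (vertices `0`-based: `j` represents `j+1 ∈ [n]`). -/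
theorem stmt12 (n m : ℕ) (hm : 1 ≤ m) (hn : m + 2 ≤ n)
    (I : Finset (Fin n)) (hne : I.Nonempty) (hind : IsIndep (pathPow n m) ↑I) :
    ∃ I' : Finset (Fin n), ∃ hne' : I'.Nonempty, IsIndep (pathPow n m) ↑I' ∧
      ((I'.min' hne').val : ℤ) + 1 ≤ m + 1 ∧
      (n : ℤ) - m ≤ ((I'.max' hne').val : ℤ) + 1 ∧
      gammaGrOn (pathPow n m) ↑I ≤ gammaGrOn (pathPow n m) ↑I' :=
  stmt12_general n m hn I
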